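/- arXiv:1508.03448 — 2 statements merged into one kernel-verified Lean document; each statement's English description precedes it below -/
import Mathlib

section
/- For every u, d ∈ ℝⁿ and every index k ∈ {1,…,n}, the one-sided directional derivative F'_k(u, d) = lim_{t→0⁺} (F_k(u + t·d) − F_k(u))/t exists and is given by: F'_k(u, d) = γ(∇²g(u)d)_k if k ∈ A(u); F'_k(u, d) = d_k if k ∈ I°(u); F'_k(u, d) = min{γ(∇²g(u)d)_k, d_k} if k ∈ I⁺(u); and F'_k(u, d) = max{γ(∇²g(u)d)_k, d_k} if k ∈ I⁻(u). -/
open scoped RealInnerProductSpace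
open Filter Topology

noncomputable section

abbrev Euc (n : ℕ) := EuclideanSpace ℝ (Fin n)

variable {n : ℕ}

/-- Componentwise soft-thresholding operator `(S_{γw}(v))_k = sgn(v_k)·max(|v_k| − γw_k, 0)`. -/
def soft (γ : ℝ) (w : Fin n → ℝ) (v : Euc n) : Euc n :=
  WithLp.toLp 2 (fun k => Real.sign (v k) * max (|v k| - γ * w k) 0)

/-- The map `F(u) = u − S_{γw}(u − γ∇g(u))`. -/
def Fm (g : Euc n → ℝ) (γ : ℝ) (w : Fin n → ℝ) (u : Euc n) : Euc n :=
  u - soft γ w (u - γ • gradient g u)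

/-- The merit functional `Θ(u) = ‖F(u)‖₂²`. -/
def Th (g : Euc n → ℝ) (γ : ℝ) (w : Fin n → ℝ) (u : Euc n) : ℝ :=
  ‖Fm g γ w u‖ ^ 2

/-- The Hessian of `g` at `u`, applied to `d`: `∇²g(u)d`. -/
def hess (g : Euc n → ℝ) (u d : Euc n) : Euc n :=
  fderiv ℝ (gradient g) u d

/-- Standing assumptions on `g`: twice continuously differentiable, Lipschitz continuous
second derivative, and uniform bounds `c₁‖h‖² ≤ ⟨∇²g(u)h, h⟩ ≤ c₂‖h‖²`. -/
structure Assump (n : ℕ) (g : Euc n → ℝ) (c₁ c₂ : ℝ) : Prop where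
  contDiff : ContDiff ℝ 2 g
  lipHess : ∃ L : NNReal, LipschitzWith L fun u => fderiv ℝ (gradient g) u
  c1_pos : 0 < c₁
  c1_le_c2 : c₁ ≤ c₂
  lower : ∀ u h : Euc n, c₁ * ‖h‖ ^ 2 ≤ ⟪hess g u h, h⟫
  upper : ∀ u h : Euc n, ⟪hess g u h, h⟫ ≤ c₂ * ‖h‖ ^ 2

/-- `A⁺(u)`. -/
def Ap (g : Euc n → ℝ) (γ : ℝ) (w : Fin n → ℝ) (u : Euc n) : Set (Fin n) :=
  {k | γ * gradient g u k + γ * w k < u k}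

/-- `A⁻(u)`. -/
def Am (g : Euc n → ℝ) (γ : ℝ) (w : Fin n → ℝ) (u : Euc n) : Set (Fin n) :=
  {k | u k < γ * gradient g u k - γ * w k}

/-- `A(u) = A⁺(u) ∪ A⁻(u)`. -/
def Aset (g : Euc n → ℝ) (γ : ℝ) (w : Fin n → ℝ) (u : Euc n) : Set (Fin n) :=
  Ap g γ w u ∪ Am g γ w u

/-- `I°(u)`. -/
def Iz (g : Euc n → ℝ) (γ : ℝ) (w : Fin n → ℝ) (u : Euc n) : Set (Fin n) :=
  {k | γ * gradient g u k - γ * w k < u k ∧ u k < γ * gradient g u k + γ * w k}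

/-- `I⁺(u)`. -/
def Ipl (g : Euc n → ℝ) (γ : ℝ) (w : Fin n → ℝ) (u : Euc n) : Set (Fin n) :=
  {k | u k = γ * gradient g u k + γ * w k}

/-- `I⁻(u)`. -/
def Imi (g : Euc n → ℝ) (γ : ℝ) (w : Fin n → ℝ) (u : Euc n) : Set (Fin n) :=
  {k | u k = γ * gradient g u k - γ * w k}

/-- `A⁺₊(u)`. -/
def App (g : Euc n → ℝ) (γ : ℝ) (w : Fin n → ℝ) (u : Euc n) : Set (Fin n) :=
  {k | γ * gradient g u k + γ * w k < u k ∧ u k < 0}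

/-- `A⁻₋(u)`. -/
def Amm (g : Euc n → ℝ) (γ : ℝ) (w : Fin n → ℝ) (u : Euc n) : Set (Fin n) :=
  {k | 0 < u k ∧ u k < γ * gradient g u k - γ * w k}

/-- `I°₊(u)`. -/
def Izp (g : Euc n → ℝ) (γ : ℝ) (w : Fin n → ℝ) (u : Euc n) : Set (Fin n) :=
  {k | γ * gradient g u k - γ * w k < u k ∧ u k < γ * gradient g u k + γ * w k ∧
    γ * gradient g u k + γ * w k < 0}

/-- `I°₋(u)`. -/
def Izm (g : Euc n → ℝ) (γ : ℝ) (w : Fin n → ℝ) (u : Euc n) : Set (Fin n) :=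
  {k | 0 < γ * gradient g u k - γ * w k ∧ γ * gradient g u k - γ * w k < u k ∧
    u k < γ * gradient g u k + γ * w k}

/-- `Ā⁺(u) = A⁺(u) \ A⁺₊(u)`. -/
def ApBar (g : Euc n → ℝ) (γ : ℝ) (w : Fin n → ℝ) (u : Euc n) : Set (Fin n) :=
  Ap g γ w u \ App g γ w u

/-- `Ā⁻(u) = A⁻(u) \ A⁻₋(u)`. -/
def AmBar (g : Euc n → ℝ) (γ : ℝ) (w : Fin n → ℝ) (u : Euc n) : Set (Fin n) :=
  Am g γ w u \ Amm g γ w u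

/-- `Ā(u) = Ā⁺(u) ∪ Ā⁻(u)`. -/
def ABar (g : Euc n → ℝ) (γ : ℝ) (w : Fin n → ℝ) (u : Euc n) : Set (Fin n) :=
  ApBar g γ w u ∪ AmBar g γ w u

/-- `Ī°(u) = I°(u) \ (I°₊(u) ∪ I°₋(u))`. -/
def IzBar (g : Euc n → ℝ) (γ : ℝ) (w : Fin n → ℝ) (u : Euc n) : Set (Fin n) :=
  Iz g γ w u \ (Izp g γ w u ∪ Izm g γ w u)

/-- `Ī⁺(u) = I⁺(u) ∪ A⁺₊(u) ∪ I°₊(u)`. -/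
def IplBar (g : Euc n → ℝ) (γ : ℝ) (w : Fin n → ℝ) (u : Euc n) : Set (Fin n) :=
  Ipl g γ w u ∪ App g γ w u ∪ Izp g γ w u

/-- `Ī⁻(u) = I⁻(u) ∪ A⁻₋(u) ∪ I°₋(u)`. -/
def ImiBar (g : Euc n → ℝ) (γ : ℝ) (w : Fin n → ℝ) (u : Euc n) : Set (Fin n) :=
  Imi g γ w u ∪ Amm g γ w u ∪ Izm g γ w u

/-- `d` is a modified Newton direction at `u`. -/
def IsModDir (g : Euc n → ℝ) (γ : ℝ) (w : Fin n → ℝ) (u d : Euc n) : Prop :=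
  (∀ k ∈ ABar g γ w u, γ * hess g u d k = - Fm g γ w u k) ∧
  (∀ k ∈ IzBar g γ w u, d k = - u k) ∧
  (∀ k ∈ IplBar g γ w u, 0 ≤ d k + u k ∧ 0 ≤ γ * hess g u d k + Fm g γ w u k ∧
    (d k + u k) * (γ * hess g u d k + Fm g γ w u k) = 0) ∧
  (∀ k ∈ ImiBar g γ w u, d k + u k ≤ 0 ∧ γ * hess g u d k + Fm g γ w u k ≤ 0 ∧
    (d k + u k) * (γ * hess g u d k + Fm g γ w u k) = 0)

/-- `d` is a B-Newton direction at `u` (unmodified index sets). -/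
def IsBDir (g : Euc n → ℝ) (γ : ℝ) (w : Fin n → ℝ) (u d : Euc n) : Prop :=
  (∀ k ∈ Aset g γ w u, γ * hess g u d k = - Fm g γ w u k) ∧
  (∀ k ∈ Iz g γ w u, d k = - u k) ∧
  (∀ k ∈ Ipl g γ w u, 0 ≤ d k + u k ∧ 0 ≤ γ * hess g u d k + Fm g γ w u k ∧
    (d k + u k) * (γ * hess g u d k + Fm g γ w u k) = 0) ∧
  (∀ k ∈ Imi g γ w u, d k + u k ≤ 0 ∧ γ * hess g u d k + Fm g γ w u k ≤ 0 ∧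
    (d k + u k) * (γ * hess g u d k + Fm g γ w u k) = 0)

/-- `t = β^l` where `l` is the smallest nonnegative integer satisfying the Armijo inequality. -/
def ArmijoStepsize (g : Euc n → ℝ) (γ : ℝ) (w : Fin n → ℝ) (β σ : ℝ) (u d : Euc n)
    (t : ℝ) : Prop :=
  ∃ l : ℕ, t = β ^ l ∧
    Th g γ w (u + (β ^ l) • d) ≤ (1 - 2 * σ * β ^ l) * Th g γ w u ∧
    ∀ l' < l, ¬ (Th g γ w (u + (β ^ l') • d) ≤ (1 - 2 * σ * β ^ l') * Th g γ w u)

/-- The modified B-semismooth Newton iteration with Armijo damping. -/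
def ModIter (g : Euc n → ℝ) (γ : ℝ) (w : Fin n → ℝ) (β σ : ℝ)
    (useq dseq : ℕ → Euc n) (tseq : ℕ → ℝ) : Prop :=
  (∀ j, IsModDir g γ w (useq j) (dseq j)) ∧
  (∀ j, ArmijoStepsize g γ w β σ (useq j) (dseq j) (tseq j)) ∧
  (∀ j, useq (j + 1) = useq j + tseq j • dseq j)

/-- The B-semismooth Newton iteration (unmodified index sets) with Armijo damping. -/
def BIter (g : Euc n → ℝ) (γ : ℝ) (w : Fin n → ℝ) (β σ : ℝ)
    (useq dseq : ℕ → Euc n) (tseq : ℕ → ℝ) : Prop :=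
  (∀ j, IsBDir g γ w (useq j) (dseq j)) ∧
  (∀ j, ArmijoStepsize g γ w β σ (useq j) (dseq j) (tseq j)) ∧
  (∀ j, useq (j + 1) = useq j + tseq j • dseq j)

/-!
Write `ψ(t)` for the `k`-th coordinate of the forward step `u + td − γ∇g(u + td)` and
`a = γw_k > 0`. Since `sgn x · max(|x| − a, 0) = max(x − a, 0) − max(−x − a, 0)`, one has
`F_k(u + td) = u_k + t d_k − max(ψ(t) − a, 0) + max(−ψ(t) − a, 0)`, and `ψ` is differentiable
with `ψ'(0) = d_k − γ(∇²g(u)d)_k`. The right derivative of `max(φ, 0)` at `0` is `φ'(0)`, `0`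
or `max(φ'(0), 0)` according as `φ(0)` is positive, negative or zero, and the index sets
`A⁺, A⁻, I°, I⁺, I⁻` are exactly the sign patterns of `ψ(0) − a` and `−ψ(0) − a`.
-/

theorem sign_mul_max_abs_sub (x : ℝ) {a : ℝ} (ha : 0 ≤ a) :
    Real.sign x * max (|x| - a) 0 = max (x - a) 0 - max (-x - a) 0 := by
  rcases lt_trichotomy x 0 with hx | rfl | hx
  · rw [Real.sign_of_neg hx, abs_of_neg hx, max_eq_right (a := x - a) (by linarith)]
    ring
  · simp [ha]
  · rw [Real.sign_of_pos hx, abs_of_pos hx, max_eq_right (a := -x - a) (by linarith)]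
    ring

section OneSidedSlope

variable {φ : ℝ → ℝ} {φ' : ℝ}

theorem HasDerivWithinAt.tendsto_div_Ioi (hφ : HasDerivWithinAt φ φ' (Set.Ioi 0) 0) :
    Tendsto (fun t => (φ t - φ 0) / t) (𝓝[>] 0) (𝓝 φ') := by
  refine ((hasDerivWithinAt_iff_tendsto_slope' (lt_irrefl 0)).mp hφ).congr fun t => ?_
  rw [slope_def_field, sub_zero]

theorem HasDerivWithinAt.tendsto_div_max_zero_of_pos (hφ : HasDerivWithinAt φ φ' (Set.Ioi 0) 0)
    (h0 : 0 < φ 0) :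
    Tendsto (fun t => (max (φ t) 0 - max (φ 0) 0) / t) (𝓝[>] 0) (𝓝 φ') := by
  refine hφ.tendsto_div_Ioi.congr' ?_
  filter_upwards [hφ.continuousWithinAt.eventually (lt_mem_nhds h0)] with t ht
  rw [max_eq_left ht.le, max_eq_left h0.le]

theorem HasDerivWithinAt.tendsto_div_max_zero_of_neg (hφ : HasDerivWithinAt φ φ' (Set.Ioi 0) 0)
    (h0 : φ 0 < 0) :
    Tendsto (fun t => (max (φ t) 0 - max (φ 0) 0) / t) (𝓝[>] 0) (𝓝 0) := by
  refine tendsto_const_nhds.congr' ?_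
  filter_upwards [hφ.continuousWithinAt.eventually (gt_mem_nhds h0)] with t ht
  rw [max_eq_right ht.le, max_eq_right h0.le, sub_self, zero_div]

theorem HasDerivWithinAt.tendsto_div_max_zero_of_eq_zero
    (hφ : HasDerivWithinAt φ φ' (Set.Ioi 0) 0) (h0 : φ 0 = 0) :
    Tendsto (fun t => (max (φ t) 0 - max (φ 0) 0) / t) (𝓝[>] 0) (𝓝 (max φ' 0)) := by
  refine (hφ.tendsto_div_Ioi.max tendsto_const_nhds).congr' ?_
  filter_upwards [self_mem_nhdsWithin] with t (ht : 0 < t)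
  rw [h0, max_self, sub_zero, sub_zero, ← zero_div t, max_div_div_right ht.le, zero_div]

end OneSidedSlope

def forwardStep (g : Euc n → ℝ) (γ : ℝ) (v : Euc n) : Euc n :=
  v - γ • gradient g v

theorem Fm_apply (g : Euc n → ℝ) {γ : ℝ} {w : Fin n → ℝ} (v : Euc n) {k : Fin n}
    (hwk : 0 ≤ γ * w k) :
    Fm g γ w v k = v k - (max (forwardStep g γ v k - γ * w k) 0
      - max (-forwardStep g γ v k - γ * w k) 0) := by
  rw [← sign_mul_max_abs_sub _ hwk]
  rfl

theorem differentiable_gradient_of_contDiff_two {E : Type*} [NormedAddCommGroup E]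
    [InnerProductSpace ℝ E] [CompleteSpace E] {g : E → ℝ} (hg : ContDiff ℝ 2 g) :
    Differentiable ℝ (gradient g) :=
  (InnerProductSpace.toDual ℝ E).symm.differentiable.comp
    ((hg.fderiv_right (by norm_num)).differentiable one_ne_zero)

theorem hasLineDerivAt_forwardStep_apply {g : Euc n → ℝ} (γ : ℝ) {u : Euc n}
    (hg : DifferentiableAt ℝ (gradient g) u) (d : Euc n) (k : Fin n) :
    HasLineDerivAt ℝ (fun v => forwardStep g γ v k) (d k - γ * hess g u d k) u d := by
  have h := (EuclideanSpace.proj k).hasFDerivAt.comp u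
    ((hasFDerivAt_id u).sub (hg.hasFDerivAt.const_smul γ))
  exact h.hasLineDerivAt d

theorem tendsto_div_Fm_apply {g : Euc n → ℝ} {γ : ℝ} {w : Fin n → ℝ} {u d : Euc n} {k : Fin n}
    (hwk : 0 ≤ γ * w k) {ψ : ℝ → ℝ} (hψ : ∀ t, ψ t = forwardStep g γ (u + t • d) k) {p q : ℝ}
    (hp : Tendsto (fun t => (max (ψ t - γ * w k) 0 - max (ψ 0 - γ * w k) 0) / t) (𝓝[>] 0)
      (𝓝 p))
    (hq : Tendsto (fun t => (max (-ψ t - γ * w k) 0 - max (-ψ 0 - γ * w k) 0) / t) (𝓝[>] 0)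
      (𝓝 q)) :
    Tendsto (fun t : ℝ => (Fm g γ w (u + t • d) k - Fm g γ w u k) / t) (𝓝[>] 0)
      (𝓝 (d k - p + q)) := by
  refine ((tendsto_const_nhds.sub hp).add hq).congr' ?_
  filter_upwards [self_mem_nhdsWithin] with t (ht : 0 < t)
  have hu : u = u + (0 : ℝ) • d := by rw [zero_smul, add_zero]
  rw [Fm_apply _ _ hwk, Fm_apply _ _ hwk, ← hψ, hu, ← hψ, ← hu]
  simp only [PiLp.add_apply, PiLp.smul_apply, smul_eq_mul]
  field_simp
  ring

theorem stmt0_general {n : ℕ} (c₁ c₂ : ℝ) (g : Euc n → ℝ) (hg : Assump n g c₁ c₂)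
    (w : Fin n → ℝ) (hw : ∀ k, 0 < w k) (γ : ℝ) (hγ : 0 < γ)
    (u d : Euc n) (k : Fin n) :
    (k ∈ Aset g γ w u →
      Tendsto (fun t : ℝ => (Fm g γ w (u + t • d) k - Fm g γ w u k) / t) (𝓝[>] 0)
        (𝓝 (γ * hess g u d k))) ∧
    (k ∈ Iz g γ w u →
      Tendsto (fun t : ℝ => (Fm g γ w (u + t • d) k - Fm g γ w u k) / t) (𝓝[>] 0)
        (𝓝 (d k))) ∧
    (k ∈ Ipl g γ w u →
      Tendsto (fun t : ℝ => (Fm g γ w (u + t • d) k - Fm g γ w u k) / t) (𝓝[>] 0)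
        (𝓝 (min (γ * hess g u d k) (d k)))) ∧
    (k ∈ Imi g γ w u →
      Tendsto (fun t : ℝ => (Fm g γ w (u + t • d) k - Fm g γ w u k) / t) (𝓝[>] 0)
        (𝓝 (max (γ * hess g u d k) (d k)))) := by
  set a := γ * w k
  have ha : 0 < a := mul_pos hγ (hw k)
  set ψ : ℝ → ℝ := fun t => forwardStep g γ (u + t • d) k
  have hψ0 : ψ 0 = u k - γ * gradient g u k := by simp [ψ, forwardStep]
  have hψ' : HasDerivWithinAt ψ (d k - γ * hess g u d k) (Set.Ioi 0) 0 :=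
    HasDerivAt.hasDerivWithinAt <| hasLineDerivAt_forwardStep_apply γ
      (differentiable_gradient_of_contDiff_two hg.contDiff u) d k
  have hup := hψ'.sub_const a
  have hdown := hψ'.neg.sub_const a
  refine ⟨fun hk => ?_, fun hk => ?_, fun hk => ?_, fun hk => ?_⟩
  · rcases hk with hk | hk
    · have hk : γ * gradient g u k + a < u k := hk
      convert tendsto_div_Fm_apply ha.le (fun _ => rfl)
        (hup.tendsto_div_max_zero_of_pos (show 0 < ψ 0 - a by linarith))
        (hdown.tendsto_div_max_zero_of_neg (show -ψ 0 - a < 0 by linarith)) using 2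
      ring
    · have hk : u k < γ * gradient g u k - a := hk
      convert tendsto_div_Fm_apply ha.le (fun _ => rfl)
        (hup.tendsto_div_max_zero_of_neg (show ψ 0 - a < 0 by linarith))
        (hdown.tendsto_div_max_zero_of_pos (show 0 < -ψ 0 - a by linarith)) using 2
      ring
  · obtain ⟨hlo, hhi⟩ : γ * gradient g u k - a < u k ∧ u k < γ * gradient g u k + a := hk
    convert tendsto_div_Fm_apply ha.le (fun _ => rfl)
      (hup.tendsto_div_max_zero_of_neg (show ψ 0 - a < 0 by linarith))
      (hdown.tendsto_div_max_zero_of_neg (show -ψ 0 - a < 0 by linarith)) using 2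
    ring
  · have hk : u k = γ * gradient g u k + a := hk
    convert tendsto_div_Fm_apply ha.le (fun _ => rfl)
      (hup.tendsto_div_max_zero_of_eq_zero (show ψ 0 - a = 0 by linarith))
      (hdown.tendsto_div_max_zero_of_neg (show -ψ 0 - a < 0 by linarith)) using 2
    rw [← min_sub_sub_left, sub_zero, sub_sub_cancel, add_zero]
  · have hk : u k = γ * gradient g u k - a := hk
    convert tendsto_div_Fm_apply ha.le (fun _ => rfl)
      (hup.tendsto_div_max_zero_of_neg (show ψ 0 - a < 0 by linarith))
      (hdown.tendsto_div_max_zero_of_eq_zero (show -ψ 0 - a = 0 by linarith)) using 2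
    rw [sub_zero, neg_sub, ← max_add_add_left, add_sub_cancel, add_zero]

/-- componentwise one-sided directional derivative of `F`. -/
theorem stmt0 {n : ℕ} (hn : 1 ≤ n) (c₁ c₂ : ℝ) (g : Euc n → ℝ) (hg : Assump n g c₁ c₂)
    (w : Fin n → ℝ) (hw : ∀ k, 0 < w k) (γ : ℝ) (hγ : 0 < γ)
    (u d : Euc n) (k : Fin n) :
    (k ∈ Aset g γ w u →
      Tendsto (fun t : ℝ => (Fm g γ w (u + t • d) k - Fm g γ w u k) / t) (𝓝[>] 0)
        (𝓝 (γ * hess g u d k))) ∧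
    (k ∈ Iz g γ w u →
      Tendsto (fun t : ℝ => (Fm g γ w (u + t • d) k - Fm g γ w u k) / t) (𝓝[>] 0)
        (𝓝 (d k))) ∧
    (k ∈ Ipl g γ w u →
      Tendsto (fun t : ℝ => (Fm g γ w (u + t • d) k - Fm g γ w u k) / t) (𝓝[>] 0)
        (𝓝 (min (γ * hess g u d k) (d k)))) ∧
    (k ∈ Imi g γ w u →
      Tendsto (fun t : ℝ => (Fm g γ w (u + t • d) k - Fm g γ w u k) / t) (𝓝[>] 0)
        (𝓝 (max (γ * hess g u d k) (d k)))) :=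
  stmt0_general c₁ c₂ g hg w hw γ hγ u d k
end
end

section
/- Let M ∈ ℝ^{n×n} be symmetric positive definite, let γ > 0, and let {1,…,n} = B ∪ C be a partition into two disjoint index sets. Let G ∈ ℝ^{n×n} be the matrix with blocks G_{B,B} = γ·M_{B,B}, G_{B,C} = γ·M_{B,C}, G_{C,B} = 0 and G_{C,C} = I (identity). Then G is invertible and its inverse satisfies, in the spectral norm ‖·‖₂, the bounds ‖G⁻¹‖₂ ≤ ‖(M_{B,B})⁻¹‖₂·(1/γ + ‖M_{B,C}‖₂) + 1 ≤ ‖M⁻¹‖₂·(1/γ + ‖M‖₂) + 1. -/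
/-!
After reindexing `Fin n ≃ B ⊕ C`, `G` is the block upper-triangular matrix
`[[γ M_BB, γ M_BC], [0, I]]`, whose inverse is `[[γ⁻¹ M_BB⁻¹, -M_BB⁻¹ M_BC], [0, I]]`; bounding
the spectral norm of a block matrix by the sum of the norms of its blocks gives the first bound.
For the second, compressions do not increase the spectral norm, so `‖M_BC‖ ≤ ‖M‖`, and
`‖M⁻¹‖ • M - 1` is positive semidefinite (Cauchy–Schwarz for the form of `M`), hence so is its
principal submatrix `‖M⁻¹‖ • M_BB - 1`, which forces `‖M_BB⁻¹‖ ≤ ‖M⁻¹‖`.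
-/

open scoped Matrix.Norms.L2Operator
open Function Matrix

namespace Matrix

section Semiring

variable {R : Type*} [Semiring R] {l m n p : Type*} [Fintype m] [Fintype n]
  [DecidableEq m] [DecidableEq n]

lemma submatrix_eq_one_submatrix_mul_mul (A : Matrix m n R) (f : l → m) (g : p → n) :
    A.submatrix f g =
      (1 : Matrix m m R).submatrix f id * A * (1 : Matrix n n R).submatrix id g := by
  ext i j
  simp [mul_apply, one_apply]

lemma fromBlocks_eq_sum_one_submatrix_mul_mul [Fintype l] [Fintype p] [DecidableEq l]
    [DecidableEq p] (A : Matrix m l R) (B : Matrix m p R) (C : Matrix n l R) (D : Matrix n p R) :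
    let P₁ := (1 : Matrix (m ⊕ n) (m ⊕ n) R).submatrix id Sum.inl
    let P₂ := (1 : Matrix (m ⊕ n) (m ⊕ n) R).submatrix id Sum.inr
    let Q₁ := (1 : Matrix (l ⊕ p) (l ⊕ p) R).submatrix Sum.inl id
    let Q₂ := (1 : Matrix (l ⊕ p) (l ⊕ p) R).submatrix Sum.inr id
    fromBlocks A B C D = P₁ * A * Q₁ + P₁ * B * Q₂ + P₂ * C * Q₁ + P₂ * D * Q₂ := by
  ext (i | i) (j | j) <;> simp [mul_apply, one_apply]

end Semiring

section L2OpNorm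

variable {𝕜 : Type*} [RCLike 𝕜] {l m n p : Type*} [Fintype l] [Fintype m] [Fintype n]
  [Fintype p] [DecidableEq l] [DecidableEq m] [DecidableEq n] [DecidableEq p]

lemma l2_opNorm_one_le : ‖(1 : Matrix n n 𝕜)‖ ≤ 1 := by
  rw [cstar_norm_def, map_one]
  exact ContinuousLinearMap.norm_id_le

lemma l2_opNorm_one_submatrix_id_le {f : l → m} (hf : Injective f) :
    ‖(1 : Matrix m m 𝕜).submatrix id f‖ ≤ 1 := by
  set S := (1 : Matrix m m 𝕜).submatrix id f
  have hS : Sᴴ * S = 1 := by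
    rw [conjTranspose_submatrix, conjTranspose_one, ← submatrix_mul _ _ _ _ _ bijective_id,
      Matrix.one_mul, submatrix_one f hf]
  have hnorm : ‖S‖ * ‖S‖ ≤ 1 := by
    rw [← l2_opNorm_conjTranspose_mul_self, hS]
    exact l2_opNorm_one_le
  nlinarith [norm_nonneg S]

lemma l2_opNorm_one_submatrix_le {f : l → m} (hf : Injective f) :
    ‖(1 : Matrix m m 𝕜).submatrix f id‖ ≤ 1 := by
  rw [← l2_opNorm_conjTranspose, conjTranspose_submatrix, conjTranspose_one]
  exact l2_opNorm_one_submatrix_id_le hf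

lemma l2_opNorm_submatrix_le (A : Matrix m n 𝕜) {f : l → m} {g : p → n} (hf : Injective f)
    (hg : Injective g) : ‖A.submatrix f g‖ ≤ ‖A‖ := by
  rw [submatrix_eq_one_submatrix_mul_mul]
  calc _ ≤ ‖(1 : Matrix m m 𝕜).submatrix f id‖ * ‖A‖ * ‖(1 : Matrix n n 𝕜).submatrix id g‖ :=
        (l2_opNorm_mul _ _).trans (by gcongr; exact l2_opNorm_mul _ _)
    _ ≤ 1 * ‖A‖ * 1 := by
        gcongr
        exacts [l2_opNorm_one_submatrix_le hf, l2_opNorm_one_submatrix_id_le hg]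
    _ = ‖A‖ := by ring

lemma l2_opNorm_submatrix_equiv (A : Matrix m n 𝕜) (e₁ : l ≃ m) (e₂ : p ≃ n) :
    ‖A.submatrix e₁ e₂‖ = ‖A‖ := by
  refine le_antisymm (l2_opNorm_submatrix_le A e₁.injective e₂.injective) ?_
  simpa using l2_opNorm_submatrix_le (A.submatrix e₁ e₂) e₁.symm.injective e₂.symm.injective

lemma l2_opNorm_one_submatrix_mul_mul_le (X : Matrix l p 𝕜) {f : l → m} {g : p → n}
    (hf : Injective f) (hg : Injective g) :
    ‖(1 : Matrix m m 𝕜).submatrix id f * X * (1 : Matrix n n 𝕜).submatrix g id‖ ≤ ‖X‖ := by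
  calc _ ≤ ‖(1 : Matrix m m 𝕜).submatrix id f‖ * ‖X‖ * ‖(1 : Matrix n n 𝕜).submatrix g id‖ :=
        (l2_opNorm_mul _ _).trans (by gcongr; exact l2_opNorm_mul _ _)
    _ ≤ 1 * ‖X‖ * 1 := by
        gcongr
        exacts [l2_opNorm_one_submatrix_id_le hf, l2_opNorm_one_submatrix_le hg]
    _ = ‖X‖ := by ring

lemma l2_opNorm_fromBlocks_le (A : Matrix m l 𝕜) (B : Matrix m p 𝕜) (C : Matrix n l 𝕜)
    (D : Matrix n p 𝕜) : ‖fromBlocks A B C D‖ ≤ ‖A‖ + ‖B‖ + ‖C‖ + ‖D‖ := by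
  rw [fromBlocks_eq_sum_one_submatrix_mul_mul]
  refine (norm_add₄_le ..).trans ?_
  gcongr
  exacts [l2_opNorm_one_submatrix_mul_mul_le A Sum.inl_injective Sum.inl_injective,
    l2_opNorm_one_submatrix_mul_mul_le B Sum.inl_injective Sum.inr_injective,
    l2_opNorm_one_submatrix_mul_mul_le C Sum.inr_injective Sum.inl_injective,
    l2_opNorm_one_submatrix_mul_mul_le D Sum.inr_injective Sum.inr_injective]

lemma fromBlocks_smul_zero_one_mul_eq_one {A : Matrix m m 𝕜} (hA : IsUnit A) {γ : 𝕜}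
    (hγ : γ ≠ 0) (B : Matrix m n 𝕜) :
    fromBlocks (γ • A) (γ • B) 0 (1 : Matrix n n 𝕜) *
      fromBlocks (γ⁻¹ • A⁻¹) (-(A⁻¹ * B)) 0 (1 : Matrix n n 𝕜) = 1 := by
  have hAA : A * A⁻¹ = 1 := mul_nonsing_inv A ((isUnit_iff_isUnit_det A).mp hA)
  rw [fromBlocks_multiply, ← fromBlocks_one]
  congr 1 <;> simp [smul_smul, hγ, hAA, ← Matrix.mul_assoc]

lemma l2_opNorm_fromBlocks_inv_smul_zero_one_le (A : Matrix m m 𝕜) (B : Matrix m n 𝕜) (γ : 𝕜) :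
    ‖fromBlocks (γ⁻¹ • A⁻¹) (-(A⁻¹ * B)) 0 (1 : Matrix n n 𝕜)‖ ≤
      ‖A⁻¹‖ * (‖γ‖⁻¹ + ‖B‖) + 1 := by
  calc _ ≤ ‖γ⁻¹ • A⁻¹‖ + ‖-(A⁻¹ * B)‖ + ‖(0 : Matrix n m 𝕜)‖ + ‖(1 : Matrix n n 𝕜)‖ :=
        l2_opNorm_fromBlocks_le ..
    _ ≤ ‖γ‖⁻¹ * ‖A⁻¹‖ + ‖A⁻¹‖ * ‖B‖ + 0 + 1 := by
        rw [norm_smul, norm_neg, norm_inv, norm_zero]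
        gcongr
        exacts [l2_opNorm_mul _ _, l2_opNorm_one_le]
    _ = _ := by ring

end L2OpNorm

lemma dotProduct_eq_inner {n : Type*} [Fintype n] (x y : n → ℝ) :
    x ⬝ᵥ y = inner ℝ (WithLp.toLp 2 x) (WithLp.toLp 2 y) := by
  simp [EuclideanSpace.inner_toLp_toLp, dotProduct_comm]

section Real

variable {m n : Type*} [Fintype m] [Fintype n] [DecidableEq m] [DecidableEq n]

lemma dotProduct_mulVec_le_l2_opNorm_mul (A : Matrix n n ℝ) (x : n → ℝ) :
    x ⬝ᵥ A *ᵥ x ≤ ‖A‖ * (x ⬝ᵥ x) := by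
  rw [dotProduct_eq_inner x x, real_inner_self_eq_norm_sq, ← WithLp.ofLp_toLp 2 x,
    ← inner_toEuclideanCLM, cstar_norm_def]
  calc _ ≤ ‖WithLp.toLp 2 x‖ * ‖toEuclideanCLM (𝕜 := ℝ) A (WithLp.toLp 2 x)‖ :=
        real_inner_le_norm _ _
    _ ≤ ‖WithLp.toLp 2 x‖ * (‖toEuclideanCLM (𝕜 := ℝ) A‖ * ‖WithLp.toLp 2 x‖) := by
        gcongr; exact ContinuousLinearMap.le_opNorm _ _
    _ = _ := by ring

lemma PosDef.posSemidef_l2_opNorm_inv_smul_sub_one {M : Matrix n n ℝ} (hM : M.PosDef) :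
    (‖M⁻¹‖ • M - 1).PosSemidef := by
  have hMT : Mᵀ = M := hM.isHermitian
  have hM_nonneg (v : n → ℝ) : 0 ≤ v ⬝ᵥ M *ᵥ v := by
    simpa using hM.posSemidef.dotProduct_mulVec_nonneg v
  refine .of_dotProduct_mulVec_nonneg
    ((IsHermitian.smul hM.isHermitian (.all _)).sub isHermitian_one) fun x => ?_
  set y := M⁻¹ *ᵥ x
  have hy : M *ᵥ y = x := by simp [y, mulVec_mulVec, M.mul_nonsing_inv hM.det_pos.ne'.isUnit]
  have hyx : y ⬝ᵥ M *ᵥ x = x ⬝ᵥ x := by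
    rw [dotProduct_mulVec, ← mulVec_transpose, hMT, hy]
  -- Cauchy–Schwarz for the form of `M` at `x` and `M⁻¹ *ᵥ x`: `(x ⬝ᵥ x)² ≤ (x ⬝ᵥ M x)(x ⬝ᵥ M⁻¹ x)`
  have cs := LinearMap.BilinForm.apply_mul_apply_le_of_forall_zero_le (toLinearMap₂' ℝ M)
    (fun v => by simpa only [toLinearMap₂'_apply'] using hM_nonneg v) x y
  simp only [toLinearMap₂'_apply', hy, hyx, dotProduct_comm y x] at cs
  have hxx : 0 ≤ x ⬝ᵥ x := by rw [dotProduct_eq_inner]; exact real_inner_self_nonneg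
  have hinv := dotProduct_mulVec_le_l2_opNorm_mul M⁻¹ x
  have hxMx := hM_nonneg x
  simp only [star_trivial, sub_mulVec, smul_mulVec, one_mulVec, dotProduct_sub, dotProduct_smul,
    smul_eq_mul]
  rcases hxx.eq_or_lt with h0 | h0
  · rw [← h0, sub_zero]
    exact mul_nonneg (norm_nonneg _) hxMx
  · nlinarith

lemma l2_opNorm_inv_le_of_posSemidef_smul_sub_one {A : Matrix n n ℝ} {d : ℝ} (hd : 0 ≤ d)
    (h : (d • A - 1).PosSemidef) : ‖A⁻¹‖ ≤ d := by
  by_cases hA : IsUnit A.det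
  swap
  · simpa [nonsing_inv_apply_not_isUnit A hA] using hd
  rw [cstar_norm_def]
  refine ContinuousLinearMap.opNorm_le_bound _ hd fun y => ?_
  set x := A⁻¹ *ᵥ y.ofLp
  have hx : A *ᵥ x = y.ofLp := by simp [x, mulVec_mulVec, mul_nonsing_inv A hA]
  have h1 : ‖WithLp.toLp 2 x‖ * ‖WithLp.toLp 2 x‖ ≤ d * ‖y‖ * ‖WithLp.toLp 2 x‖ := by
    have hpos := h.dotProduct_mulVec_nonneg x
    simp only [star_trivial, sub_mulVec, smul_mulVec, one_mulVec, dotProduct_sub,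
      dotProduct_smul, smul_eq_mul, hx] at hpos
    have hcs := real_inner_le_norm (WithLp.toLp 2 x) y
    rw [← dotProduct_eq_inner] at hcs
    rw [← sq, ← real_inner_self_eq_norm_sq, ← dotProduct_eq_inner]
    nlinarith
  change ‖WithLp.toLp 2 x‖ ≤ d * ‖y‖
  rcases (norm_nonneg (WithLp.toLp 2 x)).eq_or_lt with h0 | h0
  · rw [← h0]; positivity
  · exact le_of_mul_le_mul_right h1 h0

lemma PosDef.l2_opNorm_inv_submatrix_le {M : Matrix n n ℝ} (hM : M.PosDef) {f : m → n}
    (hf : Injective f) : ‖(M.submatrix f f)⁻¹‖ ≤ ‖M⁻¹‖ := by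
  refine l2_opNorm_inv_le_of_posSemidef_smul_sub_one (norm_nonneg _) ?_
  simpa [submatrix_sub, submatrix_smul, submatrix_one f hf] using
    hM.posSemidef_l2_opNorm_inv_smul_sub_one.submatrix f

end Real

lemma submatrix_sumElim_eq_fromBlocks {ι R : Type*} [DecidableEq ι] [Semiring R]
    {B C : Finset ι} (hdisj : Disjoint B C) (γ : R) (M G : Matrix ι ι R)
    (hG : ∀ i j, G i j = if i ∈ B then γ * M i j else (if i = j then 1 else 0)) :
    G.submatrix (Sum.elim ((↑) : B → ι) ((↑) : C → ι)) (Sum.elim ((↑) : B → ι) ((↑) : C → ι)) =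
      fromBlocks (γ • M.submatrix (↑) (↑)) (γ • M.submatrix (↑) (↑)) 0 1 := by
  ext (i | i) (j | j)
  · simp [hG]
  · simp [hG]
  · simp only [submatrix_apply, Sum.elim_inr, Sum.elim_inl, fromBlocks_apply₂₁, hG,
      if_neg (Finset.disjoint_right.mp hdisj i.2)]
    exact if_neg fun h : (i : ι) = j => Finset.disjoint_right.mp hdisj i.2 (h ▸ j.2)
  · simp only [submatrix_apply, Sum.elim_inr, fromBlocks_apply₂₂, hG,
      if_neg (Finset.disjoint_right.mp hdisj i.2), one_apply, Subtype.ext_iff]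

end Matrix

theorem stmt14_general {n : ℕ} (γ : ℝ) (hγ : 0 < γ)
    (M : Matrix (Fin n) (Fin n) ℝ) (hM : M.PosDef)
    (B C : Finset (Fin n)) (hdisj : Disjoint B C) (hunion : B ∪ C = Finset.univ)
    (G : Matrix (Fin n) (Fin n) ℝ)
    (hG : ∀ i j, G i j =
      if i ∈ B then γ * M i j else (if i = j then 1 else 0)) :
    IsUnit G ∧
    ‖G⁻¹‖ ≤
      ‖(M.submatrix (fun i : {x // x ∈ B} => (i : Fin n))
          (fun j : {x // x ∈ B} => (j : Fin n)))⁻¹‖ *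
        (1 / γ + ‖M.submatrix (fun i : {x // x ∈ B} => (i : Fin n))
          (fun j : {x // x ∈ C} => (j : Fin n))‖) + 1 ∧
    ‖(M.submatrix (fun i : {x // x ∈ B} => (i : Fin n))
        (fun j : {x // x ∈ B} => (j : Fin n)))⁻¹‖ *
      (1 / γ + ‖M.submatrix (fun i : {x // x ∈ B} => (i : Fin n))
        (fun j : {x // x ∈ C} => (j : Fin n))‖) + 1 ≤
      ‖M⁻¹‖ * (1 / γ + ‖M‖) + 1 := by
  set MBB := M.submatrix (fun i : {x // x ∈ B} => (i : Fin n)) (fun j : {x // x ∈ B} => (j : Fin n))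
  set MBC := M.submatrix (fun i : {x // x ∈ B} => (i : Fin n)) (fun j : {x // x ∈ C} => (j : Fin n))
  let e : B ⊕ C ≃ Fin n :=
    (Equiv.Finset.union B C hdisj).trans (Equiv.subtypeUnivEquiv (by simp [hunion]))
  have hGe : G.submatrix e e = fromBlocks (γ • MBB) (γ • MBC) 0 1 := by
    convert submatrix_sumElim_eq_fromBlocks hdisj γ M G hG <;> ext (i | i) <;> rfl
  let H := (fromBlocks (γ⁻¹ • MBB⁻¹) (-(MBB⁻¹ * MBC)) 0 1).submatrix e.symm e.symm
  have hBB : IsUnit MBB := (hM.submatrix Subtype.val_injective).isUnit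
  have hG' : G = (fromBlocks (γ • MBB) (γ • MBC) 0 1).submatrix e.symm e.symm := by
    rw [← hGe, submatrix_submatrix]
    simp
  have hGH : G * H = 1 := by
    rw [hG', submatrix_mul_equiv, fromBlocks_smul_zero_one_mul_eq_one hBB hγ.ne',
      submatrix_one_equiv]
  refine ⟨.of_mul_eq_one H hGH, ?_, ?_⟩
  · rw [inv_eq_right_inv hGH, l2_opNorm_submatrix_equiv]
    convert l2_opNorm_fromBlocks_inv_smul_zero_one_le MBB MBC γ using 3
    rw [Real.norm_of_nonneg hγ.le, one_div]
  · gcongr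
    exacts [hM.l2_opNorm_inv_submatrix_le Subtype.val_injective,
      l2_opNorm_submatrix_le M Subtype.val_injective Subtype.val_injective]

/-- the generalized derivative `G`, with blocks
`G_{B,B} = γM_{B,B}`, `G_{B,C} = γM_{B,C}`, `G_{C,B} = 0`, `G_{C,C} = I`, is
invertible, and its inverse satisfies the stated bounds in the spectral norm. -/
theorem stmt14 {n : ℕ} (γ : ℝ) (hγ : 0 < γ)
    (M : Matrix (Fin n) (Fin n) ℝ) (hMsymm : M.IsSymm) (hM : M.PosDef)
    (B C : Finset (Fin n)) (hdisj : Disjoint B C) (hunion : B ∪ C = Finset.univ)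
    (G : Matrix (Fin n) (Fin n) ℝ)
    (hG : ∀ i j, G i j =
      if i ∈ B then γ * M i j else (if i = j then 1 else 0)) :
    IsUnit G ∧
    ‖G⁻¹‖ ≤
      ‖(M.submatrix (fun i : {x // x ∈ B} => (i : Fin n))
          (fun j : {x // x ∈ B} => (j : Fin n)))⁻¹‖ *
        (1 / γ + ‖M.submatrix (fun i : {x // x ∈ B} => (i : Fin n))
          (fun j : {x // x ∈ C} => (j : Fin n))‖) + 1 ∧
    ‖(M.submatrix (fun i : {x // x ∈ B} => (i : Fin n))
        (fun j : {x // x ∈ B} => (j : Fin n)))⁻¹‖ *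
      (1 / γ + ‖M.submatrix (fun i : {x // x ∈ B} => (i : Fin n))
        (fun j : {x // x ∈ C} => (j : Fin n))‖) + 1 ≤
      ‖M⁻¹‖ * (1 / γ + ‖M‖) + 1 :=
  stmt14_general γ hγ M hM B C hdisj hunion G hG
end
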